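/- arXiv:2503.22944 — 2 statements merged into one kernel-verified Lean document; each statement's English description precedes it below -/
import Mathlib

section
/- Let (X,d) be a compact metric space and T : X → X a continuous map. Then for every n ∈ ℕ and every ε > 0, the minimal cardinality of an (n,ε)-spanning set for the induced hyperspace map satisfies Span(T_K, n, ε) ≤ 2^{Span(T, n, ε)}. -/
open Metric Filter TopologicalSpace MeasureTheory Set

namespace Paper

variable {α : Type*}

/-- `A` is `(n,ε)`-separated for the iterates of `S`, w.r.t. the distance function `D`. -/
def IsSep (D : α → α → ℝ) (S : α → α) (n : ℕ) (ε : ℝ) (A : Set α) : Prop :=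
  ∀ x ∈ A, ∀ y ∈ A, x ≠ y → ∃ i < n, ε ≤ D (S^[i] x) (S^[i] y)

/-- `Sep(S,n,ε)`: maximal cardinality of an `(n,ε)`-separated set. -/
noncomputable def sep (D : α → α → ℝ) (S : α → α) (n : ℕ) (ε : ℝ) : ℕ :=
  sSup {k | ∃ A : Finset α, A.card = k ∧ IsSep D S n ε ↑A}

/-- `E` is `(n,ε)`-spanning for the iterates of `S`, w.r.t. the distance function `D`. -/
def IsSpan (D : α → α → ℝ) (S : α → α) (n : ℕ) (ε : ℝ) (E : Finset α) : Prop :=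
  ∀ x : α, ∃ y ∈ E, ∀ i < n, D (S^[i] x) (S^[i] y) < ε

/-- `Span(S,n,ε)`: minimal cardinality of an `(n,ε)`-spanning set. -/
noncomputable def span (D : α → α → ℝ) (S : α → α) (n : ℕ) (ε : ℝ) : ℕ :=
  sInf {k | ∃ E : Finset α, E.card = k ∧ IsSpan D S n ε E}

variable {X : Type*} [MetricSpace X]

/-- The induced hyperspace map `T_K` on nonempty compact (= closed, for `X` compact) subsets. -/
noncomputable def indK (T : X → X) (hT : Continuous T) :
    NonemptyCompacts X → NonemptyCompacts X :=
  fun W => ⟨⟨T '' ↑W, W.isCompact.image hT⟩, W.nonempty.image T⟩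

variable [MeasurableSpace X] [BorelSpace X]

/-- The measure-induced (push-forward) map `T_*` on Borel probability measures. -/
noncomputable def push (T : X → X) (hT : Continuous T) :
    ProbabilityMeasure X → ProbabilityMeasure X :=
  fun μ => ⟨(μ : Measure X).map T, Measure.isProbabilityMeasure_map hT.measurable.aemeasurable⟩

/-- The (one-sided) Lévy–Prokhorov metric
`ρ(μ,ν) = inf {δ > 0 | μ(A) ≤ ν(A_δ) + δ for all Borel A}`. -/
noncomputable def prokhorov (μ ν : ProbabilityMeasure X) : ℝ :=
  sInf {δ : ℝ | 0 < δ ∧ ∀ A : Set X, MeasurableSet A →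
    (μ A : ℝ) ≤ (ν (Metric.thickening δ A) : ℝ) + δ}

end Paper

/-!
If `E` is `(n,ε)`-spanning for `T`, the nonempty subsets of `E` are `(n,ε)`-spanning for `T_K`:
a compact `W` is approximated by the set `S` of points of `E` lying `(n,ε)`-close to `W`, since
each `T^i x` (`x ∈ W`) is `ε`-close to some `T^i y` (`y ∈ S`) and conversely. The Hausdorff
distance stays strictly below `ε` because both `T^i W` and `T^i S` are compact, so the
point-to-set distances attain their maxima.
-/

namespace Paper

section Spanning

variable {α : Type*} {D : α → α → ℝ} {S : α → α} {n : ℕ} {ε : ℝ}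

theorem span_le_card {E : Finset α} (hE : IsSpan D S n ε E) : span D S n ε ≤ E.card :=
  Nat.sInf_le ⟨E, rfl, hE⟩

theorem exists_isSpan_card_eq_span (h : ∃ E, IsSpan D S n ε E) :
    ∃ E, IsSpan D S n ε E ∧ E.card = span D S n ε := by
  obtain ⟨E, hE⟩ := h
  obtain ⟨E', hcard, hE'⟩ := Nat.sInf_mem
    (s := {k | ∃ E : Finset α, E.card = k ∧ IsSpan D S n ε E}) ⟨E.card, E, rfl, hE⟩
  exact ⟨E', hE', hcard⟩

end Spanning

variable {X : Type*} [MetricSpace X]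

theorem exists_isSpan [CompactSpace X] {T : X → X} (hT : Continuous T) (n : ℕ) {ε : ℝ}
    (hε : 0 < ε) : ∃ E, IsSpan dist T n ε E := by
  obtain ⟨E, -, hcover⟩ := isCompact_univ.elim_nhds_subcover
    (fun y => {x | ∀ i < n, dist (T^[i] x) (T^[i] y) < ε}) fun y _ =>
      (Filter.eventually_all_finite (finite_lt_nat n)).2 fun i _ =>
        (hT.iterate i).continuousAt (ball_mem_nhds _ hε)
  exact ⟨E, fun x => by simpa using hcover (mem_univ x)⟩

theorem hausdorffDist_lt_of_forall_infDist_lt {A B : Set X} {ε : ℝ}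
    (hA : IsCompact A) (hB : IsCompact B) (hA₀ : A.Nonempty) (hB₀ : B.Nonempty)
    (hAB : ∀ a ∈ A, infDist a B < ε) (hBA : ∀ b ∈ B, infDist b A < ε) :
    hausdorffDist A B < ε := by
  obtain ⟨a, ha, ha_max⟩ := hA.exists_isMaxOn hA₀ (continuous_infDist_pt B).continuousOn
  obtain ⟨b, hb, hb_max⟩ := hB.exists_isMaxOn hB₀ (continuous_infDist_pt A).continuousOn
  refine (hausdorffDist_le_of_infDist (r := max (infDist a B) (infDist b A))
    (le_max_of_le_left infDist_nonneg) (fun x hx => le_max_of_le_left (ha_max hx))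
    (fun y hy => le_max_of_le_right (hb_max hy))).trans_lt (max_lt (hAB a ha) (hBA b hb))

theorem indK_iterate_coe {T : X → X} (hT : Continuous T) (i : ℕ) (W : NonemptyCompacts X) :
    ((indK T hT)^[i] W : Set X) = T^[i] '' W := by
  induction i with
  | zero => simp
  | succ i ih =>
    rw [Function.iterate_succ_apply', Function.iterate_succ', image_comp, ← ih]
    rfl

theorem dist_indK_iterate_lt {T : X → X} (hT : Continuous T) {n : ℕ} {ε : ℝ}
    {W V : NonemptyCompacts X}
    (hWV : ∀ x ∈ W, ∃ y ∈ V, ∀ i < n, dist (T^[i] x) (T^[i] y) < ε)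
    (hVW : ∀ y ∈ V, ∃ x ∈ W, ∀ i < n, dist (T^[i] x) (T^[i] y) < ε) :
    ∀ i < n, dist ((indK T hT)^[i] W) ((indK T hT)^[i] V) < ε := by
  intro i hi
  rw [NonemptyCompacts.dist_eq, indK_iterate_coe, indK_iterate_coe]
  refine hausdorffDist_lt_of_forall_infDist_lt (W.isCompact.image (hT.iterate i))
    (V.isCompact.image (hT.iterate i)) (W.nonempty.image _) (V.nonempty.image _) ?_ ?_
  · rintro _ ⟨x, hx, rfl⟩
    obtain ⟨y, hy, hxy⟩ := hWV x hx
    exact (infDist_le_dist_of_mem (mem_image_of_mem _ hy)).trans_lt (hxy i hi)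
  · rintro _ ⟨y, hy, rfl⟩
    obtain ⟨x, hx, hxy⟩ := hVW y hy
    exact (infDist_le_dist_of_mem (mem_image_of_mem _ hx)).trans_lt
      (dist_comm (T^[i] x) _ ▸ hxy i hi)

def nonemptyCompactsOfFinset : {s : Finset X // s.Nonempty} ↪ NonemptyCompacts X where
  toFun s := ⟨⟨s.1, s.1.finite_toSet.isCompact⟩, s.2⟩
  inj' _ _ h := Subtype.ext <| Finset.coe_injective <|
    congrArg (fun K : NonemptyCompacts X => (K : Set X)) h

theorem isSpan_indK {T : X → X} (hT : Continuous T) {n : ℕ} {ε : ℝ}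
    {E : Finset X} (hE : IsSpan dist T n ε E) :
    IsSpan dist (indK T hT) n ε ((E.powerset.subtype Finset.Nonempty).map
      nonemptyCompactsOfFinset) := by
  classical
  intro W
  set S := E.filter fun y => ∃ x ∈ W, ∀ i < n, dist (T^[i] x) (T^[i] y) < ε
  have hWS : ∀ x ∈ W, ∃ y ∈ S, ∀ i < n, dist (T^[i] x) (T^[i] y) < ε := fun x hx =>
    let ⟨y, hyE, hxy⟩ := hE x
    ⟨y, Finset.mem_filter.2 ⟨hyE, x, hx, hxy⟩, hxy⟩
  have hS : S.Nonempty :=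
    let ⟨x, hx⟩ := W.nonempty
    let ⟨y, hy, _⟩ := hWS x hx
    ⟨y, hy⟩
  refine ⟨nonemptyCompactsOfFinset ⟨S, hS⟩, Finset.mem_map_of_mem _ ?_,
    dist_indK_iterate_lt hT hWS fun y hy => (Finset.mem_filter.1 hy).2⟩
  exact Finset.mem_subtype.2 (Finset.mem_powerset.2 (Finset.filter_subset _ _))

end Paper

open Paper in
/-- `Span(T_K, n, ε) ≤ 2 ^ Span(T, n, ε)` for all `n` and `ε > 0`. -/
theorem span_induced_hyperspace_le_two_pow_span
    {X : Type*} [MetricSpace X] [CompactSpace X] (T : X → X) (hT : Continuous T) :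
    ∀ (n : ℕ), ∀ ε > (0 : ℝ), span dist (indK T hT) n ε ≤ 2 ^ span dist T n ε := by
  intro n ε hε
  obtain ⟨E, hE, hEcard⟩ := exists_isSpan_card_eq_span (exists_isSpan hT n hε)
  calc span dist (indK T hT) n ε
      ≤ ((E.powerset.subtype Finset.Nonempty).map nonemptyCompactsOfFinset).card :=
        span_le_card (isSpan_indK hT hE)
    _ ≤ E.powerset.card := by
        rw [Finset.card_map, Finset.card_subtype]
        exact Finset.card_filter_le _ _
    _ = 2 ^ span dist T n ε := by rw [Finset.card_powerset, hEcard]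
end

section
/- Let (X,d) be a compact metric space, T : X → X a continuous map, a : ℕ → (0,∞) a nondecreasing sequence, and ρ the Lévy–Prokhorov metric on M(X). Assume o(T) ≥ [a(n)], expressed concretely as: every nondecreasing sequence c : ℕ → [0,∞) such that for every ε > 0 there is C > 0 with Sep(T,n,ε) ≤ C·c(n) for all n, also satisfies a(n) ≤ C'·c(n) for all n, for some C' > 0. Then o(T_*) ≥ sup{[a(n)^t] : t ∈ (0,∞)}, expressed concretely as: every nondecreasing sequence c : ℕ → [0,∞) such that for every ε > 0 there is C > 0 with Sep(T_*,n,ε) ≤ C·c(n) for all n (separated sets taken in (M(X),ρ)), satisfies: for every t > 0 there is C' > 0 with a(n)^t ≤ C'·c(n) for all n. -/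
open Metric Filter TopologicalSpace MeasureTheory Set

/-! Fix an `(n, ε)`-separated set `A ⊆ X` and `m ≥ 1`. To `u : Fin m → A` attach the probability
measure `μ_u = ∑ⱼ 2ʲ δ_{u j} / (2ᵐ - 1)`; these `|A|ᵐ` measures are `(n, δ)`-separated for `T_*`
with `δ = min 2⁻ᵐ (ε / (m + 2))`. Indeed, let `r` be the last index with `u r ≠ v r` and let
`T^i` separate `u r` from `v r`. By pigeonhole one of the `m + 1` shells
`R δ ≤ d(·, T^i (u r)) < (R + 1) δ` contains no `T^i (u j)`. The ball of radius `R δ` then gets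
strictly more binary weight from `T^i_* μ_u` than its `δ`-thickening gets from `T^i_* μ_v`:
a gap of at least `1 / (2ᵐ - 1) > δ`.
Hence `Sep(T,n,ε)ᵐ ≤ Sep(T_*,n,δ)`, so `c^{1/m}` dominates every `Sep(T,·,ε)` when `c` dominates
every `Sep(T_*,·,δ)`, whence `a ≼ c^{1/m}` and `aᵗ ≤ a(0)^{t-m} aᵐ ≼ c` for `t ≤ m = ⌈t⌉`.
Since `ℕ`-valued `sSup` is `0` on unbounded sets, the maximal cardinalities must be shown finite;
this follows from compactness of `M(X)` (Prokhorov) in the Lévy–Prokhorov metric.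
-/

open scoped ENNReal

namespace Paper

section Separated

variable {α : Type*} {D : α → α → ℝ} {S : α → α} {n : ℕ} {ε : ℝ}

def sepCards (D : α → α → ℝ) (S : α → α) (n : ℕ) (ε : ℝ) : Set ℕ :=
  {k | ∃ A : Finset α, A.card = k ∧ IsSep D S n ε ↑A}

lemma IsSep.card_le_sep {A : Finset α} (hA : IsSep D S n ε A)
    (hbdd : BddAbove (sepCards D S n ε)) : A.card ≤ sep D S n ε :=
  le_csSup hbdd ⟨A, rfl, hA⟩

lemma exists_isSep_card_eq_sep (hbdd : BddAbove (sepCards D S n ε)) :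
    ∃ A : Finset α, A.card = sep D S n ε ∧ IsSep D S n ε A :=
  Nat.sSup_mem (s := sepCards D S n ε) ⟨0, ∅, rfl, by simp [IsSep]⟩ hbdd

lemma bddAbove_sepCards [TopologicalSpace α] [CompactSpace α] {Y : Type*} [PseudoMetricSpace Y]
    {e : α → Y} (he : Continuous e) (hS : Continuous S) (hD : ∀ x y, D x y ≤ dist (e x) (e y))
    (n : ℕ) (hε : 0 < ε) : BddAbove (sepCards D S n ε) := by
  set Φ : α → Fin n → Y := fun x i => e (S^[i] x)
  have hΦ : Continuous Φ := continuous_pi fun i => he.comp (hS.iterate i)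
  obtain ⟨t, -, ht, hcover⟩ := finite_cover_balls_of_compact (isCompact_range hΦ) (half_pos hε)
  have hcenter : ∀ x, ∃ c ∈ ht.toFinset, Φ x ∈ ball c (ε / 2) := fun x => by
    simpa using hcover (mem_range_self x)
  choose center hcenter_mem hcenter_ball using hcenter
  refine ⟨ht.toFinset.card, ?_⟩
  rintro k ⟨A, rfl, hA⟩
  refine Finset.card_le_card_of_injOn center (fun x _ => hcenter_mem x) fun x hx y hy hxy => ?_
  by_contra hne
  obtain ⟨i, hi, hεi⟩ := hA x hx y hy hne
  have hx := hcenter_ball x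
  rw [hxy, mem_ball] at hx
  have hclose : dist (Φ x) (Φ y) < ε :=
    calc dist (Φ x) (Φ y) ≤ dist (Φ x) (center y) + dist (Φ y) (center y) :=
          dist_triangle_right _ _ _
      _ < ε / 2 + ε / 2 := add_lt_add hx (hcenter_ball y)
      _ = ε := add_halves ε
  exact (hεi.trans ((hD _ _).trans (dist_le_pi_dist (Φ x) (Φ y) ⟨i, hi⟩))).not_gt hclose

end Separated

section LevyProkhorov

variable {X : Type*} [MetricSpace X] [MeasurableSpace X]

lemma le_prokhorov {μ ν : ProbabilityMeasure X} {δ : ℝ}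
    (h : ∀ b, 0 < b → b < δ → ∃ A, MeasurableSet A ∧ (ν (thickening b A) : ℝ) + b < μ A) :
    δ ≤ prokhorov μ ν := by
  refine le_csInf ⟨1, one_pos, fun A _ => ?_⟩ fun b ⟨hb, hbA⟩ => ?_
  · have : (μ A : ℝ) ≤ 1 := μ.apply_le_one A
    linarith [(ν (thickening 1 A)).2]
  · by_contra! hbδ
    obtain ⟨A, hA, hlt⟩ := h b hb hbδ
    exact (hbA A hA).not_gt hlt

lemma prokhorov_le {μ ν : ProbabilityMeasure X} {δ : ℝ} (hδ : 0 < δ)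
    (h : ∀ A, MeasurableSet A → (μ A : ℝ) ≤ ν (thickening δ A) + δ) : prokhorov μ ν ≤ δ :=
  csInf_le ⟨0, fun _ hb => hb.1.le⟩ ⟨hδ, h⟩

lemma prokhorov_le_levyProkhorovDist (μ ν : ProbabilityMeasure X) :
    prokhorov μ ν ≤ levyProkhorovDist (μ : Measure X) ν := by
  refine le_of_forall_gt_imp_ge_of_dense fun δ hδ => ?_
  have hδ₀ : 0 ≤ δ := ENNReal.toReal_nonneg.trans hδ.le
  have hlt : levyProkhorovEDist (μ : Measure X) ν < ENNReal.ofReal δ :=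
    (ENNReal.lt_ofReal_iff_toReal_lt (levyProkhorovEDist_ne_top _ _)).2 hδ
  refine prokhorov_le (ENNReal.toReal_nonneg.trans_lt hδ) fun A hA => ?_
  have h := ENNReal.toReal_mono (by finiteness) (left_measure_le_of_levyProkhorovEDist_lt hlt hA)
  rw [ENNReal.toReal_add (by finiteness) ENNReal.ofReal_ne_top, ENNReal.toReal_ofReal hδ₀] at h
  exact h

variable [BorelSpace X]

lemma bddAbove_sepCards_push [CompactSpace X] (T : X → X) (hT : Continuous T) (n : ℕ) {ε : ℝ}
    (hε : 0 < ε) : BddAbove (sepCards prokhorov (push T hT) n ε) :=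
  bddAbove_sepCards LevyProkhorov.continuous_ofMeasure_probabilityMeasure
    (ProbabilityMeasure.continuous_map hT) prokhorov_le_levyProkhorovDist n hε

end LevyProkhorov

section Dyadic

open scoped Classical

variable {X Y : Type*} [MeasurableSpace X] [MeasurableSpace Y] {m : ℕ}

lemma sum_fin_two_pow (m : ℕ) : ∑ j : Fin m, 2 ^ (j : ℕ) = 2 ^ m - 1 := by
  rw [Fin.sum_univ_eq_sum_range (2 ^ ·), Nat.geomSum_eq le_rfl]
  simp

noncomputable def dyadicMeasure (u : Fin m → X) : Measure X :=
  ((2 ^ m - 1 : ℕ) : ℝ≥0∞)⁻¹ • ∑ j : Fin m, (2 : ℝ≥0∞) ^ (j : ℕ) • Measure.dirac (u j)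

lemma dyadicMeasure_apply (u : Fin m → X) {s : Set X} (hs : MeasurableSet s) :
    dyadicMeasure u s = ((∑ j with u j ∈ s, 2 ^ (j : ℕ) : ℕ) : ℝ≥0∞) / (2 ^ m - 1 : ℕ) := by
  simp [dyadicMeasure, Finset.sum_filter, Measure.dirac_apply' _ hs, indicator_apply,
    ENNReal.div_eq_inv_mul]

instance [NeZero m] (u : Fin m → X) : IsProbabilityMeasure (dyadicMeasure u) := by
  constructor
  rw [dyadicMeasure_apply u .univ]
  simp only [Set.mem_univ, Finset.filter_true, sum_fin_two_pow]
  refine ENNReal.div_self ?_ (ENNReal.natCast_ne_top _)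
  have := Nat.one_lt_two_pow (NeZero.ne m)
  exact_mod_cast (Nat.sub_pos_of_lt this).ne'

lemma map_dyadicMeasure {f : X → Y} (hf : Measurable f) (u : Fin m → X) :
    (dyadicMeasure u).map f = dyadicMeasure (f ∘ u) := by
  ext s hs
  rw [Measure.map_apply hf hs, dyadicMeasure_apply _ (hf hs), dyadicMeasure_apply _ hs]
  rfl

noncomputable def dyadicPM [NeZero m] (u : Fin m → X) : ProbabilityMeasure X :=
  ⟨dyadicMeasure u, inferInstance⟩

lemma dyadicPM_apply [NeZero m] (u : Fin m → X) {s : Set X} (hs : MeasurableSet s) :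
    (dyadicPM u s : ℝ) = (∑ j with u j ∈ s, 2 ^ (j : ℕ) : ℕ) / (2 ^ m - 1 : ℕ) := by
  change (dyadicMeasure u s).toReal = _
  rw [dyadicMeasure_apply u hs, ENNReal.toReal_div]
  simp only [ENNReal.toReal_natCast]

lemma push_iterate_dyadicPM [MetricSpace X] [BorelSpace X] (T : X → X) (hT : Continuous T)
    [NeZero m] (u : Fin m → X) (i : ℕ) : (push T hT)^[i] (dyadicPM u) = dyadicPM (T^[i] ∘ u) := by
  induction i with
  | zero => rfl
  | succ i ih =>
    rw [Function.iterate_succ_apply', ih, Function.iterate_succ', Function.comp_assoc]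
    exact Subtype.ext (map_dyadicMeasure hT.measurable _)

end Dyadic

section Separation

open Finset.Colex
open scoped Classical

variable {X : Type*} [MetricSpace X] {m : ℕ}

noncomputable def dyadicScale (m : ℕ) (ε : ℝ) : ℝ := min (2 ^ m)⁻¹ (ε / (m + 2))

lemma dyadicScale_pos (m : ℕ) {ε : ℝ} (hε : 0 < ε) : 0 < dyadicScale m ε :=
  lt_min (by positivity) (by positivity)

lemma sum_two_pow_lt_of_toColex_lt {s t : Finset (Fin m)} (h : toColex s < toColex t) :
    ∑ j ∈ s, 2 ^ (j : ℕ) < ∑ j ∈ t, 2 ^ (j : ℕ) := by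
  rw [← Finset.sum_image (g := Fin.val) (f := (2 ^ ·)) Fin.val_injective.injOn,
    ← Finset.sum_image (g := Fin.val) (f := (2 ^ ·)) Fin.val_injective.injOn]
  exact (Finset.geomSum_lt_geomSum_iff_toColex_lt_toColex le_rfl).2
    ((toColex_image_lt_toColex_image Fin.val_strictMono).2 h)

lemma mem_ball_of_mem_thickening_ball {p x : X} {b : ℝ} {R : ℕ} (hb : 0 < b)
    (hx : x ∈ thickening b (ball p (R * b))) (hR : ⌊dist x p / b⌋₊ ≠ R) :
    x ∈ ball p (R * b) := by
  have hlt : dist x p < (R + 1) * b := by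
    have := thickening_ball p b (R * b) hx
    rw [mem_ball] at this
    linarith
  rw [mem_ball]
  by_contra! hge
  exact hR ((Nat.floor_eq_iff (by positivity)).2 ⟨(le_div_iff₀ hb).2 hge, (div_lt_iff₀ hb).2 hlt⟩)

variable [MeasurableSpace X] [OpensMeasurableSpace X]

lemma exists_toColex_thickening_lt {u v : Fin m → X} {r : Fin m}
    (hsuffix : ∀ j, r < j → u j = v j) {b : ℝ} (hb : 0 < b) (hr : (m + 2) * b ≤ dist (u r) (v r)) :
    ∃ B, MeasurableSet B ∧ toColex ({j | v j ∈ thickening b B} : Finset (Fin m)) <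
      toColex ({j | u j ∈ B} : Finset (Fin m)) := by
  obtain ⟨R, hR, hRu⟩ : ∃ R ∈ Finset.Icc 1 (m + 1),
      R ∉ Finset.univ.image fun j => ⌊dist (u j) (u r) / b⌋₊ :=
    Finset.exists_mem_notMem_of_card_lt_card (Finset.card_image_le.trans_lt (by simp))
  rw [Finset.mem_Icc] at hR
  set B := ball (u r) (R * b)
  have hshell : ∀ j, u j ∈ thickening b B → u j ∈ B := fun j hj =>
    mem_ball_of_mem_thickening_ball hb hj fun h =>
      hRu (h ▸ Finset.mem_image_of_mem _ (Finset.mem_univ j))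
  have hvr : v r ∉ thickening b B := fun h => by
    have := thickening_ball _ _ _ h
    have hRm : (R : ℝ) ≤ m + 1 := by exact_mod_cast hR.2
    rw [mem_ball, dist_comm] at this
    nlinarith
  have hur : u r ∈ B := mem_ball_self (mul_pos (by exact_mod_cast hR.1) hb)
  refine ⟨B, measurableSet_ball, toColex_lt_toColex_iff_exists_forall_lt.2
    ⟨r, by simpa using hur, by simpa using hvr, fun j hj hju => ?_⟩⟩
  simp only [Finset.mem_filter, Finset.mem_univ, true_and] at hj hju
  by_contra! hrj
  rcases hrj.lt_or_eq with h | rfl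
  · exact hju (hshell j (hsuffix j h ▸ hj))
  · exact hvr hj

lemma le_prokhorov_dyadicPM [NeZero m] {u v : Fin m → X} {r : Fin m}
    (hsuffix : ∀ j, r < j → u j = v j) {ε : ℝ} (hr : ε ≤ dist (u r) (v r)) :
    dyadicScale m ε ≤ prokhorov (dyadicPM u) (dyadicPM v) := by
  refine le_prokhorov fun b hb hbδ => ?_
  rw [dyadicScale, lt_min_iff, lt_div_iff₀ (by positivity)] at hbδ
  have hbε : (m + 2) * b ≤ ε := by linarith [hbδ.2]
  obtain ⟨B, hB, hlt⟩ := exists_toColex_thickening_lt hsuffix hb (hbε.trans hr)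
  refine ⟨B, hB, ?_⟩
  rw [dyadicPM_apply _ hB, dyadicPM_apply _ isOpen_thickening.measurableSet]
  have hcount : (∑ j with v j ∈ thickening b B, 2 ^ (j : ℕ) : ℕ) + 1 ≤
      (∑ j with u j ∈ B, 2 ^ (j : ℕ) : ℕ) := sum_two_pow_lt_of_toColex_lt hlt
  have hQ : ((2 ^ m - 1 : ℕ) : ℝ) < 2 ^ m := by
    exact_mod_cast Nat.sub_lt (Nat.two_pow_pos m) one_pos
  have hQpos : (0 : ℝ) < (2 ^ m - 1 : ℕ) := by
    exact_mod_cast Nat.sub_pos_of_lt (Nat.one_lt_two_pow (NeZero.ne m))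
  have hbQ : b * (2 ^ m - 1 : ℕ) < 1 := by
    calc b * (2 ^ m - 1 : ℕ) < (2 ^ m)⁻¹ * 2 ^ m :=
          mul_lt_mul'' hbδ.1 hQ hb.le hQpos.le
      _ = 1 := inv_mul_cancel₀ (by positivity)
  rw [div_add' _ _ _ hQpos.ne', div_lt_div_iff_of_pos_right hQpos]
  have : ((∑ j with v j ∈ thickening b B, 2 ^ (j : ℕ) : ℕ) : ℝ) + 1 ≤
      (∑ j with u j ∈ B, 2 ^ (j : ℕ) : ℕ) := by exact_mod_cast hcount
  linarith

end Separation

lemma exists_ne_forall_gt_eq {ι β : Type*} [Fintype ι] [LinearOrder ι] {u v : ι → β}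
    (h : u ≠ v) : ∃ r, u r ≠ v r ∧ ∀ j, r < j → u j = v j := by
  classical
  obtain ⟨j, hj⟩ := Function.ne_iff.1 h
  obtain ⟨r, hr, hmax⟩ :=
    (Finset.univ.filter fun j => u j ≠ v j).exists_max_image id ⟨j, by simpa using hj⟩
  refine ⟨r, (Finset.mem_filter.1 hr).2, fun k hk => ?_⟩
  by_contra hne
  exact (hmax k (by simpa using hne)).not_gt hk

section Dynamics

open scoped Classical

variable {X : Type*} [MetricSpace X] [MeasurableSpace X] [BorelSpace X] {m : ℕ} [NeZero m]

lemma dyadicPM_injective : Function.Injective (dyadicPM : (Fin m → X) → ProbabilityMeasure X) := by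
  intro u v huv
  by_contra hne
  obtain ⟨r, hr, hsuffix⟩ := exists_ne_forall_gt_eq hne
  have hpos := dyadicScale_pos m (dist_pos.2 hr)
  have hle := le_prokhorov_dyadicPM hsuffix le_rfl
  rw [huv] at hle
  linarith [prokhorov_le_levyProkhorovDist (dyadicPM v) (dyadicPM v),
    levyProkhorovDist_self ((dyadicPM v : ProbabilityMeasure X) : Measure X)]

lemma IsSep.image_dyadicPM {T : X → X} (hT : Continuous T) {n : ℕ} {ε : ℝ} {A : Finset X}
    (hA : IsSep dist T n ε A) :
    IsSep prokhorov (push T hT) n (dyadicScale m ε)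
      ((Fintype.piFinset fun _ : Fin m => A).image dyadicPM) := by
  simp only [IsSep, Finset.coe_image, Set.forall_mem_image]
  intro u hu v hv huv
  obtain ⟨r, hr, hsuffix⟩ := exists_ne_forall_gt_eq fun h => huv (congrArg dyadicPM h)
  obtain ⟨i, hi, hεi⟩ :=
    hA (u r) (Fintype.mem_piFinset.1 hu r) (v r) (Fintype.mem_piFinset.1 hv r) hr
  refine ⟨i, hi, ?_⟩
  rw [push_iterate_dyadicPM, push_iterate_dyadicPM]
  exact le_prokhorov_dyadicPM (fun j hj => by simp [hsuffix j hj]) hεi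

lemma sep_pow_le_sep_push [CompactSpace X] (T : X → X) (hT : Continuous T) (n : ℕ) {ε : ℝ}
    (hε : 0 < ε) (m : ℕ) [NeZero m] :
    sep dist T n ε ^ m ≤ sep prokhorov (push T hT) n (dyadicScale m ε) := by
  obtain ⟨A, hcard, hA⟩ := exists_isSep_card_eq_sep
    (bddAbove_sepCards (D := dist) continuous_id hT (fun _ _ => le_rfl) n hε)
  calc sep dist T n ε ^ m = ((Fintype.piFinset fun _ : Fin m => A).image dyadicPM).card := by
        rw [Finset.card_image_of_injective _ dyadicPM_injective, Fintype.card_piFinset_const, hcard]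
    _ ≤ _ :=
        (hA.image_dyadicPM hT).card_le_sep (bddAbove_sepCards_push T hT n (dyadicScale_pos m hε))

end Dynamics

lemma le_mul_rpow_inv_of_pow_le {x y C : ℝ} {m : ℕ} (hm : m ≠ 0) (hx : 0 ≤ x) (hC : 0 ≤ C)
    (hy : 0 ≤ y) (h : x ^ m ≤ C * y) : x ≤ C ^ (m⁻¹ : ℝ) * y ^ (m⁻¹ : ℝ) := by
  rw [← Real.mul_rpow hC hy, Real.le_rpow_inv_iff_of_pos hx (by positivity) (by positivity),
    Real.rpow_natCast]
  exact h

lemma rpow_le_mul_of_le_mul_rpow_inv {a c : ℕ → ℝ} (ha : ∀ n, 0 < a n) (hamono : Monotone a)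
    (hc : ∀ n, 0 ≤ c n) {m : ℕ} (hm : m ≠ 0) {t : ℝ} (htm : t ≤ m) {C : ℝ} (hC : 0 < C)
    (h : ∀ n, a n ≤ C * c n ^ (m⁻¹ : ℝ)) : ∃ C' > 0, ∀ n, a n ^ t ≤ C' * c n := by
  refine ⟨a 0 ^ (t - m) * C ^ m, mul_pos (Real.rpow_pos_of_pos (ha 0) _) (pow_pos hC m),
    fun n => ?_⟩
  have hpow : a n ^ m ≤ C ^ m * c n :=
    calc a n ^ m ≤ (C * c n ^ (m⁻¹ : ℝ)) ^ m := pow_le_pow_left₀ (ha n).le (h n) m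
      _ = C ^ m * c n := by rw [mul_pow, Real.rpow_inv_natCast_pow (hc n) hm]
  calc a n ^ t = a n ^ (t - m) * a n ^ m := by
        rw [← Real.rpow_natCast, ← Real.rpow_add (ha n), sub_add_cancel]
    _ ≤ a 0 ^ (t - m) * (C ^ m * c n) :=
        mul_le_mul (Real.rpow_le_rpow_of_nonpos (ha 0) (hamono (Nat.zero_le n)) (by linarith))
          hpow (pow_nonneg (ha n).le m) (Real.rpow_nonneg (ha 0).le _)
    _ = _ := by ring

end Paper

open Paper in
/-- If `o(T) ≥ [a(n)]` (every nondecreasing sequence dominating all the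
sequences `n ↦ Sep(T,n,ε)` dominates `a`), then `o(T_*) ≥ sup {[a(n)^t] : t > 0}` (every
nondecreasing sequence dominating all the sequences `n ↦ Sep(T_*,n,ε)`, separated sets taken
w.r.t. the Lévy–Prokhorov metric, dominates `a^t` for every `t > 0`). -/
theorem pushforward_generalized_entropy_ge_sup_powers
    {X : Type*} [MetricSpace X] [CompactSpace X] [MeasurableSpace X] [BorelSpace X]
    (T : X → X) (hT : Continuous T)
    (a : ℕ → ℝ) (ha : ∀ n, 0 < a n) (hamono : Monotone a)
    (hoT : ∀ c : ℕ → ℝ, (∀ n, 0 ≤ c n) → Monotone c →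
      (∀ ε > (0 : ℝ), ∃ C > (0 : ℝ), ∀ n : ℕ, (sep dist T n ε : ℝ) ≤ C * c n) →
      ∃ C' > (0 : ℝ), ∀ n : ℕ, a n ≤ C' * c n) :
    ∀ c : ℕ → ℝ, (∀ n, 0 ≤ c n) → Monotone c →
      (∀ ε > (0 : ℝ), ∃ C > (0 : ℝ), ∀ n : ℕ,
        (sep prokhorov (push T hT) n ε : ℝ) ≤ C * c n) →
      ∀ t > (0 : ℝ), ∃ C' > (0 : ℝ), ∀ n : ℕ, a n ^ t ≤ C' * c n := by
  intro c hc hcmono hdom t ht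
  set m := ⌈t⌉₊
  have hm : m ≠ 0 := (Nat.ceil_pos.2 ht).ne'
  have : NeZero m := ⟨hm⟩
  have hroot : ∀ ε > (0 : ℝ), ∃ C > (0 : ℝ), ∀ n, (sep dist T n ε : ℝ) ≤ C * c n ^ (m⁻¹ : ℝ) := by
    intro ε hε
    obtain ⟨C, hC, hsep⟩ := hdom _ (dyadicScale_pos m hε)
    refine ⟨C ^ (m⁻¹ : ℝ), by positivity, fun n => ?_⟩
    refine le_mul_rpow_inv_of_pow_le hm (Nat.cast_nonneg _) hC.le (hc n) ?_
    exact le_trans (by exact_mod_cast sep_pow_le_sep_push T hT n hε m) (hsep n)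
  obtain ⟨C, hC, ha_le⟩ := hoT _ (fun n => Real.rpow_nonneg (hc n) _)
    (fun i j hij => Real.rpow_le_rpow (hc i) (hcmono hij) (by positivity)) hroot
  exact rpow_le_mul_of_le_mul_rpow_inv ha hamono hc hm (Nat.le_ceil t) hC ha_le
end
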